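/- Let (S,𝔖,μ) and (T,𝔗,ν) be measure spaces over σ-rings. A set C ∈ 𝔖 ⊗ 𝔗 belongs to 𝔖^σ ⊗ 𝔗^σ if and only if C ⊆ S' × T' for some μ-σ-finite S' ∈ 𝔖^σ and ν-σ-finite T' ∈ 𝔗^σ. -/

import Mathlib

open Set ENNReal

/-- A family of sets is a σ-ring if it contains `∅` and is closed under
set differences and countable unions. -/
def IsSigmaRing {α : Type*} (C : Set (Set α)) : Prop :=
  ∅ ∈ C ∧ (∀ A B : Set α, A ∈ C → B ∈ C → A \ B ∈ C) ∧
    ∀ f : ℕ → Set α, (∀ n, f n ∈ C) → (⋃ n, f n) ∈ C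

/-- The σ-ring generated by a family of sets. -/
def genSR {α : Type*} (D : Set (Set α)) : Set (Set α) :=
  ⋂₀ {C | IsSigmaRing C ∧ D ⊆ C}

/-- A measure on a σ-ring: countably additive, vanishing on `∅`. -/
def IsMeasure {α : Type*} (C : Set (Set α)) (μ : Set α → ℝ≥0∞) : Prop :=
  μ ∅ = 0 ∧ ∀ f : ℕ → Set α, (∀ n, f n ∈ C) →
    Pairwise (Function.onFun Disjoint f) → μ (⋃ n, f n) = ∑' n, μ (f n)

/-- The family of μ-σ-finite sets: countable unions of sets of finite measure. -/
def sigmaFin {α : Type*} (C : Set (Set α)) (μ : Set α → ℝ≥0∞) : Set (Set α) :=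
  {A | ∃ g : ℕ → Set α, (∀ n, g n ∈ C ∧ μ (g n) < ⊤) ∧ A = ⋃ n, g n}

/-- Restriction of a family of sets to a set `S`. -/
def restrictFam {α : Type*} (D : Set (Set α)) (S : Set α) : Set (Set α) :=
  (fun A => A ∩ S) '' D

/-- The product σ-ring, generated by measurable rectangles. -/
def prodSR {α β : Type*} (S : Set (Set α)) (T : Set (Set β)) : Set (Set (α × β)) :=
  genSR {R | ∃ A ∈ S, ∃ B ∈ T, R = A ×ˢ B}

/-- The σ-algebra generated by a family of sets. -/
def genSA {α : Type*} (D : Set (Set α)) : MeasurableSpace α :=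
  MeasurableSpace.generateFrom D

/-- The (extended) Lebesgue integral of a nonnegative function with respect to a
measure on a σ-ring, as the supremum of integrals of simple functions below it. -/
noncomputable def lintSR {α : Type*} (C : Set (Set α)) (μ : Set α → ℝ≥0∞)
    (f : α → ℝ≥0∞) : ℝ≥0∞ :=
  ⨆ (n : ℕ) (c : Fin n → ℝ≥0∞) (A : Fin n → Set α) (_ : ∀ i, A i ∈ C)
    (_ : ∀ x, (∑ i, (A i).indicator (fun _ => c i) x) ≤ f x),
    ∑ i, c i * μ (A i)

/-- The positive part of an extended real, as an `ℝ≥0∞`. -/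
noncomputable def epos (x : EReal) : ℝ≥0∞ := (x ⊔ 0).abs

/-- Measurability of an extended-real function with respect to a σ-ring:
measurable for the generated σ-algebra, with support in the σ-ring. -/
def SRMeasurableE {α : Type*} (C : Set (Set α)) (f : α → EReal) : Prop :=
  @Measurable α EReal (genSA C) _ f ∧ {x | f x ≠ 0} ∈ C

/-- The Lebesgue integral of an extended-real function w.r.t. a measure on a σ-ring. -/
noncomputable def integralE {α : Type*} (C : Set (Set α)) (μ : Set α → ℝ≥0∞)
    (f : α → EReal) : EReal :=
  ((lintSR C μ fun x => epos (f x) : ℝ≥0∞) : EReal) -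
    ((lintSR C μ fun x => epos (-f x) : ℝ≥0∞) : EReal)

/-- Integrability of an extended-real function w.r.t. a measure on a σ-ring. -/
def IntegrableE {α : Type*} (C : Set (Set α)) (μ : Set α → ℝ≥0∞)
    (f : α → EReal) : Prop :=
  SRMeasurableE C f ∧ lintSR C μ (fun x => (f x).abs) < ⊤

/-- `lam` is the product of the measures `μ` and `ν` on σ-rings `S`, `T`:
the unique measure on the product σ-ring whose σ-finite component is the Halmos
product of the σ-finite components. -/
def IsProdMeasure {α β : Type*} (S : Set (Set α)) (T : Set (Set β))
    (μ : Set α → ℝ≥0∞) (ν : Set β → ℝ≥0∞) (lam : Set (α × β) → ℝ≥0∞) : Prop :=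
  IsMeasure (prodSR S T) lam ∧
  (∀ A ∈ S, ∀ B ∈ T, μ A < ⊤ → ν B < ⊤ → lam (A ×ˢ B) = μ A * ν B) ∧
  sigmaFin (prodSR S T) lam =
    genSR {R | ∃ A ∈ S, ∃ B ∈ T, μ A < ⊤ ∧ ν B < ⊤ ∧ R = A ×ˢ B}

/-! The sets lying in a rectangle `S' ×ˢ T'` of σ-finite sets form a σ-ring containing the
rectangles of σ-finite sets, hence all of `𝔖^σ ⊗ 𝔗^σ`. Conversely, for a fixed such rectangle,
`D ↦ D ∩ S' ×ˢ T'` maps the rectangles `A ×ˢ B` of `𝔖 ⊗ 𝔗` to `(A ∩ S') ×ˢ (B ∩ T')`, which lie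
in `𝔖^σ ⊗ 𝔗^σ` because `A ∩ S'` is σ-finite; the sets it maps into `𝔖^σ ⊗ 𝔗^σ` form a σ-ring,
so it maps all of `𝔖 ⊗ 𝔗` there, and `C ⊆ S' ×ˢ T'` is its own image. -/

namespace IsSigmaRing

variable {α : Type*} {R : Set (Set α)}

lemma inter_mem (hR : IsSigmaRing R) {A B : Set α} (hA : A ∈ R) (hB : B ∈ R) : A ∩ B ∈ R := by
  rw [← sdiff_sdiff_right_self]
  exact hR.2.1 _ _ hA (hR.2.1 _ _ hA hB)

lemma setOf_inter_mem (hR : IsSigmaRing R) (E : Set α) : IsSigmaRing {D | D ∩ E ∈ R} := by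
  refine ⟨?_, fun A B hA hB => ?_, fun f hf => ?_⟩
  · simpa only [mem_ofPred_eq, empty_inter] using hR.1
  · simpa only [mem_ofPred_eq, inter_sdiff_distrib_right] using hR.2.1 _ _ hA hB
  · simpa only [mem_ofPred_eq, iUnion_inter] using hR.2.2 _ hf

end IsSigmaRing

section GeneratedSigmaRing

variable {α : Type*}

lemma isSigmaRing_genSR (D : Set (Set α)) : IsSigmaRing (genSR D) :=
  ⟨fun _ hR => hR.1.1, fun _ _ hA hB R hR => hR.1.2.1 _ _ (hA R hR) (hB R hR),
    fun _ hf R hR => hR.1.2.2 _ fun n => hf n R hR⟩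

lemma subset_genSR (D : Set (Set α)) : D ⊆ genSR D :=
  fun _ hA _ hR => hR.2 hA

lemma genSR_subset {D R : Set (Set α)} (hR : IsSigmaRing R) (hDR : D ⊆ R) : genSR D ⊆ R :=
  fun _ hA => hA R ⟨hR, hDR⟩

end GeneratedSigmaRing

section ProductSigmaRing

variable {α β : Type*}

lemma isSigmaRing_setOf_subset_prod {𝒜 : Set (Set α)} {ℬ : Set (Set β)}
    (h𝒜 : 𝒜.Nonempty) (hℬ : ℬ.Nonempty)
    (h𝒜_iUnion : ∀ f : ℕ → Set α, (∀ n, f n ∈ 𝒜) → (⋃ n, f n) ∈ 𝒜)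
    (hℬ_iUnion : ∀ f : ℕ → Set β, (∀ n, f n ∈ ℬ) → (⋃ n, f n) ∈ ℬ) :
    IsSigmaRing {D : Set (α × β) | ∃ A ∈ 𝒜, ∃ B ∈ ℬ, D ⊆ A ×ˢ B} := by
  obtain ⟨A₀, hA₀⟩ := h𝒜
  obtain ⟨B₀, hB₀⟩ := hℬ
  refine ⟨⟨A₀, hA₀, B₀, hB₀, empty_subset _⟩, ?_, fun f hf => ?_⟩
  · rintro D D' ⟨A, hA, B, hB, hD⟩ -
    exact ⟨A, hA, B, hB, sdiff_subset.trans hD⟩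
  · choose A hA B hB hf using hf
    refine ⟨⋃ n, A n, h𝒜_iUnion A hA, ⋃ n, B n, hℬ_iUnion B hB, iUnion_subset fun n => ?_⟩
    exact (hf n).trans (prod_mono (subset_iUnion A n) (subset_iUnion B n))

lemma exists_subset_prod_of_mem_prodSR {𝒜 : Set (Set α)} {ℬ : Set (Set β)}
    (h𝒜 : 𝒜.Nonempty) (hℬ : ℬ.Nonempty)
    (h𝒜_iUnion : ∀ f : ℕ → Set α, (∀ n, f n ∈ 𝒜) → (⋃ n, f n) ∈ 𝒜)
    (hℬ_iUnion : ∀ f : ℕ → Set β, (∀ n, f n ∈ ℬ) → (⋃ n, f n) ∈ ℬ)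
    {C : Set (α × β)} (hC : C ∈ prodSR 𝒜 ℬ) : ∃ A ∈ 𝒜, ∃ B ∈ ℬ, C ⊆ A ×ˢ B := by
  refine genSR_subset (isSigmaRing_setOf_subset_prod h𝒜 hℬ h𝒜_iUnion hℬ_iUnion) ?_ hC
  rintro _ ⟨A, hA, B, hB, rfl⟩
  exact ⟨A, hA, B, hB, subset_rfl⟩

lemma inter_prod_mem_prodSR {S 𝒜 : Set (Set α)} {T ℬ : Set (Set β)} {S' : Set α} {T' : Set β}
    (hS' : ∀ A ∈ S, A ∩ S' ∈ 𝒜) (hT' : ∀ B ∈ T, B ∩ T' ∈ ℬ)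
    {C : Set (α × β)} (hC : C ∈ prodSR S T) : C ∩ S' ×ˢ T' ∈ prodSR 𝒜 ℬ := by
  refine genSR_subset ((isSigmaRing_genSR _).setOf_inter_mem (S' ×ˢ T')) ?_ hC
  rintro _ ⟨A, hA, B, hB, rfl⟩
  rw [mem_ofPred_eq, prod_inter_prod]
  exact subset_genSR _ ⟨_, hS' A hA, _, hT' B hB, rfl⟩

end ProductSigmaRing

namespace IsMeasure

variable {α : Type*} {S : Set (Set α)} {μ : Set α → ℝ≥0∞}

lemma mono (hS : IsSigmaRing S) (hμ : IsMeasure S μ) {E F : Set α} (hE : E ∈ S) (hF : F ∈ S)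
    (hEF : E ⊆ F) : μ E ≤ μ F := by
  -- `F` is the disjoint union of `E`, `F \ E`, `∅`, `∅`, … , the disjointed sequence of `E, F, F, …`
  set f : ℕ → Set α := fun n => if n = 0 then E else F
  have hfS : ∀ n, f n ∈ S := fun n => by dsimp only [f]; split_ifs <;> assumption
  have hf : Monotone f := monotone_nat_of_le_succ fun n => by
    rcases n with _ | n <;> simp [f, hEF]
  have hmem : ∀ n, disjointed f n ∈ S := by
    rintro (_ | n)
    · rw [disjointed_zero]; exact hfS 0
    · rw [← Order.succ_eq_add_one, hf.disjointed_succ (not_isMax n)]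
      exact hS.2.1 _ _ (hfS _) (hfS n)
  have hUnion : ⋃ n, disjointed f n = F := by
    refine iUnion_disjointed.trans ((iUnion_subset fun n => ?_).antisymm (subset_iUnion f 1))
    dsimp only [f]
    split_ifs
    exacts [hEF, subset_rfl]
  calc μ E = μ (disjointed f 0) := by simp [f]
    _ ≤ ∑' n, μ (disjointed f n) := ENNReal.le_tsum 0
    _ = μ F := by rw [← hμ.2 _ hmem (disjoint_disjointed f), hUnion]

end IsMeasure

section SigmaFinite

variable {α : Type*} {S : Set (Set α)} {μ : Set α → ℝ≥0∞}

lemma iUnion_mem_sigmaFin {f : ℕ → Set α} (hf : ∀ n, f n ∈ sigmaFin S μ) :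
    (⋃ n, f n) ∈ sigmaFin S μ := by
  choose g hg hgf using hf
  refine ⟨fun k => g k.unpair.1 k.unpair.2, fun k => hg _ _, ?_⟩
  rw [iUnion_unpair]
  exact iUnion_congr hgf

lemma empty_mem_sigmaFin (hS : IsSigmaRing S) (hμ : IsMeasure S μ) : ∅ ∈ sigmaFin S μ :=
  ⟨fun _ => ∅, fun _ => ⟨hS.1, by simp [hμ.1]⟩, by simp⟩

lemma inter_mem_sigmaFin (hS : IsSigmaRing S) (hμ : IsMeasure S μ) {A S' : Set α} (hA : A ∈ S)
    (hS' : S' ∈ sigmaFin S μ) : A ∩ S' ∈ sigmaFin S μ := by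
  obtain ⟨g, hg, rfl⟩ := hS'
  have hmem : ∀ n, A ∩ g n ∈ S := fun n => hS.inter_mem hA (hg n).1
  refine ⟨fun n => A ∩ g n, fun n => ⟨hmem n, ?_⟩, inter_iUnion A g⟩
  exact (hμ.mono hS (hmem n) (hg n).1 inter_subset_right).trans_lt (hg n).2

end SigmaFinite

/-- a product-measurable set is in `𝔖^σ ⊗ 𝔗^σ` iff it is
contained in a rectangle of σ-finite sets. -/
theorem stmt_7 {α β : Type*} (S : Set (Set α)) (T : Set (Set β))
    (μ : Set α → ℝ≥0∞) (ν : Set β → ℝ≥0∞)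
    (hS : IsSigmaRing S) (hT : IsSigmaRing T)
    (hμ : IsMeasure S μ) (hν : IsMeasure T ν)
    (C : Set (α × β)) (hCmem : C ∈ prodSR S T) :
    C ∈ prodSR (sigmaFin S μ) (sigmaFin T ν) ↔
      ∃ S' ∈ sigmaFin S μ, ∃ T' ∈ sigmaFin T ν, C ⊆ S' ×ˢ T' := by
  constructor
  · exact exists_subset_prod_of_mem_prodSR ⟨∅, empty_mem_sigmaFin hS hμ⟩
      ⟨∅, empty_mem_sigmaFin hT hν⟩ (fun _ => iUnion_mem_sigmaFin) (fun _ => iUnion_mem_sigmaFin)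
  · rintro ⟨S', hS', T', hT', hCsub⟩
    rw [← inter_eq_left.2 hCsub]
    exact inter_prod_mem_prodSR (fun A hA => inter_mem_sigmaFin hS hμ hA hS')
      (fun B hB => inter_mem_sigmaFin hT hν hB hT') hCmem
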